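/- Let G be a 3-connected simple cubic claw-free graph that is isomorphic neither to K4 nor to the complement of the 6-cycle C6. Then G has at least 12 vertices. -/

import Mathlib

open SimpleGraph

/-- A graph is cubic: every vertex has exactly 3 neighbours. -/
def IsCubic {V : Type*} (G : SimpleGraph V) : Prop :=
  ∀ v : V, Nat.card (G.neighborSet v) = 3

/-- A graph is claw-free: it has no induced `K_{1,3}`. -/
def IsClawFree {V : Type*} (G : SimpleGraph V) : Prop :=
  ∀ u a b c : V, G.Adj u a → G.Adj u b → G.Adj u c →
    a ≠ b → a ≠ c → b ≠ c → ¬ G.Adj a b → ¬ G.Adj a c → ¬ G.Adj b c → False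

/-- A graph is 3-connected: it has more than 3 vertices and deleting any set of at
most 2 vertices leaves it connected. -/
def ThreeConnected {V : Type*} [Fintype V] (G : SimpleGraph V) : Prop :=
  3 < Fintype.card V ∧
    ∀ S : Set V, Nat.card S ≤ 2 → (G.induce (Sᶜ : Set V)).Connected


private lemma sep_no_conn {V : Type*} (G : SimpleGraph V) (S A : Set V) (x y : V)
    (hx : x ∈ A) (hxS : x ∉ S) (hyA : y ∉ A) (hyS : y ∉ S)
    (hclosed : ∀ p q : V, p ∈ A → q ∉ S → G.Adj p q → q ∈ A)
    (hconn : (G.induce (Sᶜ : Set V)).Connected) : False := by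
  have hr := hconn.preconnected ⟨x, by simpa using hxS⟩ ⟨y, by simpa using hyS⟩
  obtain ⟨w⟩ := hr
  have claim : ∀ (a b : (Sᶜ : Set V)), (G.induce (Sᶜ : Set V)).Walk a b → a.1 ∈ A → b.1 ∈ A := by
    intro a b w
    induction w with
    | nil => exact id
    | @cons u v w h p ih =>
        intro ha
        have hvS : v.1 ∉ S := v.2
        have hadj : G.Adj u.1 v.1 := h
        exact ih (hclosed _ _ ha hvS hadj)
  exact hyA (claim _ _ w hx)

private lemma aux3 {V : Type*} {α β γ w x y : V} (P : V → Prop)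
    (htot : ∀ z, P z → z = α ∨ z = β ∨ z = γ)
    (hw : P w) (hx : P x) (hy : P y)
    (hwx : w ≠ x) (hwy : w ≠ y) (hxy : x ≠ y) :
    ∀ z, P z → z = w ∨ z = x ∨ z = y := by
  intro z hz
  rcases htot z hz with h|h|h <;> rcases htot w hw with h1|h1|h1 <;>
    rcases htot x hx with h2|h2|h2 <;> rcases htot y hy with h3|h3|h3 <;>
    subst_vars <;> tauto

private lemma aux_third {V : Type*} {α β γ u w : V} (P : V → Prop)
    (htot : ∀ z, P z → z = α ∨ z = β ∨ z = γ)
    (hαβ : α ≠ β) (hαγ : α ≠ γ) (hβγ : β ≠ γ)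
    (hPα : P α) (hPβ : P β) (hPγ : P γ)
    (hu : P u) (hw : P w) (huw : u ≠ w) :
    ∃ t, P t ∧ t ≠ u ∧ t ≠ w ∧ ∀ z, P z → z = u ∨ z = w ∨ z = t := by
  rcases htot u hu with h1|h1|h1 <;> rcases htot w hw with h2|h2|h2 <;> subst h1 <;> subst h2 <;>
    first
    | exact absurd rfl huw
    | (refine ⟨α, hPα, ?_, ?_, fun z hz => by rcases htot z hz with h|h|h <;> tauto⟩ <;>
        first | exact hαβ | exact hαγ | exact hβγ | exact Ne.symm hαβ | exact Ne.symm hαγ | exact Ne.symm hβγ)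
    | (refine ⟨β, hPβ, ?_, ?_, fun z hz => by rcases htot z hz with h|h|h <;> tauto⟩ <;>
        first | exact hαβ | exact hαγ | exact hβγ | exact Ne.symm hαβ | exact Ne.symm hαγ | exact Ne.symm hβγ)
    | (refine ⟨γ, hPγ, ?_, ?_, fun z hz => by rcases htot z hz with h|h|h <;> tauto⟩ <;>
        first | exact hαβ | exact hαγ | exact hβγ | exact Ne.symm hαβ | exact Ne.symm hαγ | exact Ne.symm hβγ)

private lemma aux_pair {V : Type*} {α β γ u : V} (P : V → Prop)
    (htot : ∀ z, P z → z = α ∨ z = β ∨ z = γ)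
    (hαβ : α ≠ β) (hαγ : α ≠ γ) (hβγ : β ≠ γ)
    (hPα : P α) (hPβ : P β) (hPγ : P γ) (hu : P u) :
    ∃ r s, P r ∧ P s ∧ r ≠ s ∧ r ≠ u ∧ s ≠ u := by
  rcases htot u hu with h|h|h <;> subst h
  · exact ⟨β, γ, hPβ, hPγ, hβγ, Ne.symm hαβ, Ne.symm hαγ⟩
  · exact ⟨α, γ, hPα, hPγ, hαγ, hαβ, Ne.symm hβγ⟩
  · exact ⟨α, β, hPα, hPβ, hαβ, hαγ, hβγ⟩


set_option maxHeartbeats 1000000 in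
private theorem stmt_19x {V : Type*} [Fintype V] (G : SimpleGraph V)
    (h3c : (3 < Fintype.card V ∧
    ∀ S : Set V, Nat.card S ≤ 2 → (G.induce (Sᶜ : Set V)).Connected))
    (hcubic : ∀ v : V, Nat.card (G.neighborSet v) = 3)
    (hcf : ∀ u a b c : V, G.Adj u a → G.Adj u b → G.Adj u c →
    a ≠ b → a ≠ c → b ≠ c → ¬ G.Adj a b → ¬ G.Adj a c → ¬ G.Adj b c → False)
    (hK4 : ¬ Nonempty (G ≃g (⊤ : SimpleGraph (Fin 4))))
    (hC6 : ¬ Nonempty (G ≃g (SimpleGraph.cycleGraph 6)ᶜ)) :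
    12 ≤ Fintype.card V := by
  classical
  have nbhd : ∀ v : V, ∃ x y z : V, x ≠ y ∧ x ≠ z ∧ y ≠ z ∧ G.Adj v x ∧ G.Adj v y ∧ G.Adj v z ∧
      ∀ w, G.Adj v w → w = x ∨ w = y ∨ w = z := by
    intro v
    have h3 : (G.neighborSet v).ncard = 3 := by
      rw [← Nat.card_coe_set_eq]; exact hcubic v
    obtain ⟨x, y, z, hxy, hxz, hyz, hset⟩ := Set.ncard_eq_three.mp h3
    have hmem : ∀ w, w ∈ G.neighborSet v ↔ w = x ∨ w = y ∨ w = z := by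
      intro w; rw [hset]; simp
    refine ⟨x, y, z, hxy, hxz, hyz, ?_, ?_, ?_, fun w hw => (hmem w).mp hw⟩
    · exact (hmem x).mpr (by tauto)
    · exact (hmem y).mpr (by tauto)
    · exact (hmem z).mpr (by tauto)
  obtain ⟨hV3, hconn⟩ := h3c
  -- no vertex pair with two common neighbours
  have no_diamond : ∀ p q r s : V, G.Adj p q → G.Adj p r → G.Adj p s →
      G.Adj q r → G.Adj q s → r ≠ s → False := by
    intro p q r s hpq hpr hps hqr hqs hrs
    obtain ⟨x, y, z, hxy, hxz, hyz, hPx, hPy, hPz, htot⟩ := nbhd p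
    have hNp : ∀ w, G.Adj p w → w = q ∨ w = r ∨ w = s :=
      aux3 _ htot hpq hpr hps hqr.ne hqs.ne hrs
    obtain ⟨x', y', z', hxy', hxz', hyz', hPx', hPy', hPz', htot'⟩ := nbhd q
    have hNq : ∀ w, G.Adj q w → w = p ∨ w = r ∨ w = s :=
      aux3 _ htot' hpq.symm hqr hqs hpr.ne hps.ne hrs
    by_cases hrsadj : G.Adj r s
    · -- K4 case
      obtain ⟨a1, a2, a3, h1, h2, h3, hQ1, hQ2, hQ3, htotr⟩ := nbhd r
      have hNr : ∀ w, G.Adj r w → w = p ∨ w = q ∨ w = s :=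
        aux3 _ htotr hpr.symm hqr.symm hrsadj hpq.ne hps.ne hqs.ne
      obtain ⟨b1, b2, b3, g1, g2, g3, hR1, hR2, hR3, htots⟩ := nbhd s
      have hNs : ∀ w, G.Adj s w → w = p ∨ w = q ∨ w = r :=
        aux3 _ htots hps.symm hqs.symm hrsadj.symm hpq.ne hpr.ne hqr.ne
      have hall : ∀ t : V, t = p ∨ t = q ∨ t = r ∨ t = s := by
        by_contra hc
        push_neg at hc
        obtain ⟨t, ht1, ht2, ht3, ht4⟩ := hc
        refine sep_no_conn G ∅ {p, q, r, s} p t (by simp) (by simp) ?_ (by simp) ?_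
          (hconn ∅ (by simp))
        · simp [ht1, ht2, ht3, ht4]
        · intro a b ha _ hab
          simp only [Set.mem_insert_iff, Set.mem_singleton_iff] at ha ⊢
          rcases ha with rfl|rfl|rfl|rfl
          · rcases hNp b hab with rfl|rfl|rfl <;> tauto
          · rcases hNq b hab with rfl|rfl|rfl <;> tauto
          · rcases hNr b hab with rfl|rfl|rfl <;> tauto
          · rcases hNs b hab with rfl|rfl|rfl <;> tauto
      have hGtop : G = ⊤ := by
        have hpq' := hpq.symm; have hpr' := hpr.symm; have hps' := hps.symm
        have hqr' := hqr.symm; have hqs' := hqs.symm; have hrs' := hrsadj.symm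
        ext a b
        simp only [top_adj]
        constructor
        · exact fun h => h.ne
        · intro hne
          rcases hall a with rfl|rfl|rfl|rfl <;> rcases hall b with rfl|rfl|rfl|rfl <;>
            first | exact absurd rfl hne | assumption
      have huniv : ({p, q, r, s} : Set V) = Set.univ :=
        Set.eq_univ_of_forall (by intro t; rcases hall t with rfl|rfl|rfl|rfl <;> simp)
      have h4 : ({p, q, r, s} : Set V).ncard = 4 := by
        rw [Set.ncard_insert_of_notMem (by simp [hpq.ne, hpr.ne, hps.ne]),
          Set.ncard_insert_of_notMem (by simp [hqr.ne, hqs.ne]), Set.ncard_pair hrs]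
      have hc4 : Fintype.card V = 4 := by
        rw [← Nat.card_eq_fintype_card, ← Set.ncard_univ, ← huniv, h4]
      exact hK4 ⟨by rw [hGtop]; exact Iso.completeGraph (Fintype.equivFinOfCardEq (by rw [hc4]))⟩
    · -- diamond case
      obtain ⟨a1, a2, a3, h1, h2, h3, hQ1, hQ2, hQ3, htotr⟩ := nbhd r
      obtain ⟨r', hr'adj, hr'p, hr'q, hNr⟩ :=
        aux_third _ htotr h1 h2 h3 hQ1 hQ2 hQ3 hpr.symm hqr.symm hpq.ne
      obtain ⟨b1, b2, b3, g1, g2, g3, hR1, hR2, hR3, htots⟩ := nbhd s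
      obtain ⟨s', hs'adj, hs'p, hs'q, hNs⟩ :=
        aux_third _ htots g1 g2 g3 hR1 hR2 hR3 hps.symm hqs.symm hpq.ne
      have hr's : r' ≠ s := fun h => hrsadj (h ▸ hr'adj)
      have hs'r : s' ≠ r := fun h => hrsadj (h ▸ hs'adj).symm
      have hr'r : r' ≠ r := hr'adj.ne'
      have hs's : s' ≠ s := hs'adj.ne'
      -- r' not adjacent to p or q
      have hnpr' : ¬ G.Adj p r' := by
        intro h; rcases hNp _ h with h'|h'|h'
        exacts [hr'q h', hr'r h', hr's h']
      have hnqr' : ¬ G.Adj q r' := by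
        intro h; rcases hNq _ h with h'|h'|h'
        exacts [hr'p h', hr'r h', hr's h']
      have hnps' : ¬ G.Adj p s' := by
        intro h; rcases hNp _ h with h'|h'|h'
        exacts [hs'q h', hs'r h', hs's h']
      have hnqs' : ¬ G.Adj q s' := by
        intro h; rcases hNq _ h with h'|h'|h'
        exacts [hs'p h', hs'r h', hs's h']
      have hclosedA : ∀ a b : V, a ∈ ({p, q, r, s} : Set V) → (b ≠ r' ∧ b ≠ s') →
          G.Adj a b → b ∈ ({p, q, r, s} : Set V) := by
        intro a b ha hbS hab
        simp only [Set.mem_insert_iff, Set.mem_singleton_iff] at ha ⊢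
        rcases ha with rfl|rfl|rfl|rfl
        · rcases hNp b hab with rfl|rfl|rfl <;> tauto
        · rcases hNq b hab with rfl|rfl|rfl <;> tauto
        · rcases hNr b hab with rfl|rfl|rfl <;> tauto
        · rcases hNs b hab with rfl|rfl|rfl <;> tauto
      by_cases heq : r' = s'
      · -- S = {r'}
        obtain ⟨c1, c2, c3, k1, k2, k3, hS1, hS2, hS3, htotr'⟩ := nbhd r'
        obtain ⟨t, hr't, htr, hts⟩ : ∃ t, G.Adj r' t ∧ t ≠ r ∧ t ≠ s := by
          obtain ⟨t, ht, htr, hts, _⟩ :=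
            aux_third _ htotr' k1 k2 k3 hS1 hS2 hS3 hr'adj.symm (show G.Adj r' s by rw [heq]; exact hs'adj.symm) hrs
          exact ⟨t, ht, htr, hts⟩
        have htp : t ≠ p := fun h => hnpr' (h ▸ hr't).symm
        have htq : t ≠ q := fun h => hnqr' (h ▸ hr't).symm
        refine sep_no_conn G {r'} {p, q, r, s} p t (by simp) (by simp [Ne.symm hr'p]) ?_
          (by simp [hr't.ne']) ?_ (hconn {r'} ?_)
        · simp [htp, htq, htr, hts]
        · intro a b ha hbS hab
          refine hclosedA a b ha ⟨by simpa using hbS, ?_⟩ hab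
          rw [← heq]; simpa using hbS
        · rw [Nat.card_coe_set_eq]; simp
      · -- S = {r', s'}
        obtain ⟨c1, c2, c3, k1, k2, k3, hS1, hS2, hS3, htotr'⟩ := nbhd r'
        obtain ⟨t1, t2, hadj1, hadj2, ht12, ht1r, ht2r⟩ :=
          aux_pair _ htotr' k1 k2 k3 hS1 hS2 hS3 hr'adj.symm
        have hkey : ∀ t : V, G.Adj r' t → t ≠ r → t ∉ ({p, q, r, s} : Set V) := by
          intro t ht htr
          simp only [Set.mem_insert_iff, Set.mem_singleton_iff]
          push_neg
          refine ⟨fun h => hnpr' (h ▸ ht).symm, fun h => hnqr' (h ▸ ht).symm, htr, fun h => ?_⟩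
          subst h
          rcases hNs r' ht.symm with h'|h'|h'
          exacts [hr'p h', hr'q h', heq h']
        obtain ⟨t, hr't, hts'⟩ : ∃ t, G.Adj r' t ∧ t ≠ r ∧ t ≠ s' := by
          by_cases h1 : t1 = s'
          · exact ⟨t2, hadj2, ht2r, fun h => ht12 (h1.trans h.symm)⟩
          · exact ⟨t1, hadj1, ht1r, h1⟩
        refine sep_no_conn G {r', s'} {p, q, r, s} p t (by simp)
          (by simp [Ne.symm hr'p, Ne.symm hs'p]) (hkey t hr't hts'.1) ?_ ?_ (hconn _ ?_)
        · simp [hr't.ne', hts'.2]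
        · intro a b ha hbS hab
          simp only [Set.mem_insert_iff, Set.mem_singleton_iff] at hbS
          push_neg at hbS
          exact hclosedA a b ha hbS hab
        · rw [Nat.card_coe_set_eq]
          exact le_trans (Set.ncard_insert_le _ _) (by simp)
  have hstruct : ∀ v : V, ∃ a b c : V, G.Adj v a ∧ G.Adj v b ∧ G.Adj v c ∧
      a ≠ b ∧ a ≠ c ∧ b ≠ c ∧ G.Adj a b ∧ ¬ G.Adj a c ∧ ¬ G.Adj b c ∧
      ∀ w, G.Adj v w → w = a ∨ w = b ∨ w = c := by
    intro v
    obtain ⟨x, y, z, hxy, hxz, hyz, hx, hy, hz, htot⟩ := nbhd v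
    have hedge : G.Adj x y ∨ G.Adj x z ∨ G.Adj y z := by
      by_contra hc
      push_neg at hc
      exact hcf v x y z hx hy hz hxy hxz hyz hc.1 hc.2.1 hc.2.2
    rcases hedge with h|h|h
    · refine ⟨x, y, z, hx, hy, hz, hxy, hxz, hyz, h, ?_, ?_, htot⟩
      · exact fun hc => no_diamond v x y z hx hy hz h hc hyz
      · exact fun hc => no_diamond v y x z hy hx hz h.symm hc hxz
    · refine ⟨x, z, y, hx, hz, hy, hxz, hxy, Ne.symm hyz, h, ?_, ?_, ?_⟩
      · exact fun hc => no_diamond v x z y hx hz hy h hc (Ne.symm hyz)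
      · exact fun hc => no_diamond v z x y hz hx hy h.symm hc hxy
      · intro w hw; rcases htot w hw with h'|h'|h' <;> tauto
    · refine ⟨y, z, x, hy, hz, hx, hyz, Ne.symm hxy, Ne.symm hxz, h, ?_, ?_, ?_⟩
      · exact fun hc => no_diamond v y z x hy hz hx h hc (Ne.symm hxz)
      · exact fun hc => no_diamond v z y x hz hy hx h.symm hc (Ne.symm hxy)
      · intro w hw; rcases htot w hw with h'|h'|h' <;> tauto
  choose fA fB fC hA hB hC hab hac hbc hAB hnAC hnBC hmem using hstruct
  -- uniqueness of the adjacent pair in a neighbourhood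
  have uniq : ∀ v p q : V, G.Adj v p → G.Adj v q → p ≠ q → G.Adj p q →
      (p = fA v ∧ q = fB v) ∨ (p = fB v ∧ q = fA v) := by
    intro v p q hp hq hpq hadj
    rcases hmem v p hp with rfl|rfl|rfl <;> rcases hmem v q hq with rfl|rfl|rfl <;>
      first
      | exact absurd rfl hpq
      | exact Or.inl ⟨rfl, rfl⟩
      | exact Or.inr ⟨rfl, rfl⟩
      | exact absurd hadj (hnAC v)
      | exact absurd hadj (hnBC v)
      | exact absurd hadj.symm (hnAC v)
      | exact absurd hadj.symm (hnBC v)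
  have uniqA : ∀ v : V, (v = fA (fA v) ∧ fB v = fB (fA v)) ∨ (v = fB (fA v) ∧ fB v = fA (fA v)) :=
    fun v => uniq (fA v) v (fB v) (hA v).symm (hAB v) (hB v).ne (hB v)
  have uniqB : ∀ v : V, (v = fA (fB v) ∧ fA v = fB (fB v)) ∨ (v = fB (fB v) ∧ fA v = fA (fB v)) :=
    fun v => uniq (fB v) v (fA v) (hB v).symm (hAB v).symm (hA v).ne (hA v)
  have hmemA : ∀ v w : V, G.Adj (fA v) w → w = v ∨ w = fB v ∨ w = fC (fA v) := by
    intro v w hw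
    rcases uniqA v with ⟨h1, h2⟩|⟨h1, h2⟩ <;> rcases hmem (fA v) w hw with rfl|rfl|rfl <;> tauto
  have hmemB : ∀ v w : V, G.Adj (fB v) w → w = v ∨ w = fA v ∨ w = fC (fB v) := by
    intro v w hw
    rcases uniqB v with ⟨h1, h2⟩|⟨h1, h2⟩ <;> rcases hmem (fB v) w hw with rfl|rfl|rfl <;> tauto
  -- external vertices avoid the triangle
  have hCA_ne_v : ∀ v : V, fC (fA v) ≠ v := by
    intro v h
    rcases uniqA v with ⟨h1, h2⟩|⟨h1, h2⟩
    · exact (hac (fA v)) (h1.symm.trans h.symm)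
    · exact (hbc (fA v)) (h1.symm.trans h.symm)
  have hCA_ne_B : ∀ v : V, fC (fA v) ≠ fB v := by
    intro v h
    rcases uniqA v with ⟨h1, h2⟩|⟨h1, h2⟩
    · exact (hbc (fA v)) (h2.symm.trans h.symm)
    · exact (hac (fA v)) (h2.symm.trans h.symm)
  have hCB_ne_v : ∀ v : V, fC (fB v) ≠ v := by
    intro v h
    rcases uniqB v with ⟨h1, h2⟩|⟨h1, h2⟩
    · exact (hac (fB v)) (h1.symm.trans h.symm)
    · exact (hbc (fB v)) (h1.symm.trans h.symm)
  have hCB_ne_A : ∀ v : V, fC (fB v) ≠ fA v := by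
    intro v h
    rcases uniqB v with ⟨h1, h2⟩|⟨h1, h2⟩
    · exact (hbc (fB v)) (h2.symm.trans h.symm)
    · exact (hac (fB v)) (h2.symm.trans h.symm)
  -- the three externals of a triangle are distinct
  have hD1 : ∀ v : V, fC (fA v) ≠ fC v := by
    intro v h
    exact no_diamond v (fA v) (fB v) (fC v) (hA v) (hB v) (hC v) (hAB v)
      (h ▸ hC (fA v)) (hbc v)
  have hD2 : ∀ v : V, fC (fB v) ≠ fC v := by
    intro v h
    exact no_diamond v (fB v) (fA v) (fC v) (hB v) (hA v) (hC v) (hAB v).symm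
      (h ▸ hC (fB v)) (hac v)
  have hD3 : ∀ v : V, fC (fA v) ≠ fC (fB v) := by
    intro v h
    refine no_diamond (fA v) (fB v) v (fC (fA v)) (hAB v) (hA v).symm (hC (fA v))
      (hB v).symm ?_ (Ne.symm (hCA_ne_v v))
    rw [h]; exact hC (fB v)
  have lemP : ∀ p1 p2 p3 : V,
      G.Adj p1 p2 → G.Adj p1 p3 → G.Adj p2 p3 →
      (∀ w, G.Adj p1 w → w = p2 ∨ w = p3 ∨ w = fC p1) →
      (∀ w, G.Adj p2 w → w = p1 ∨ w = p3 ∨ w = fC p2) →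
      (∀ w, G.Adj p3 w → w = p1 ∨ w = p2 ∨ w = fC p3) →
      fC p1 ≠ p2 → fC p1 ≠ p3 → fC p2 ≠ p1 → fC p2 ≠ p3 → fC p3 ≠ p1 → fC p3 ≠ p2 →
      fC p1 ≠ fC p2 → fC p1 ≠ fC p3 → fC p2 ≠ fC p3 →
      G.Adj (fC p1) (fC p2) → False := by
    intro p1 p2 p3 h12 h13 h23 hN1 hN2 hN3 hq1p2 hq1p3 hq2p1 hq2p3 hq3p1 hq3p2
      hq12 hq13 hq23 hadj
    set q1 := fC p1 with hq1def
    set q2 := fC p2 with hq2def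
    set q3 := fC p3 with hq3def
    have hq1a : G.Adj p1 q1 := hC p1
    have hq2a : G.Adj p2 q2 := hC p2
    have hq3a : G.Adj p3 q3 := hC p3
    have hnp1q2 : ¬ G.Adj p1 q2 := by
      intro h; rcases hN1 _ h with h'|h'|h'
      exacts [(hC p2).ne' h', hq2p3 h', hq12 h'.symm]
    have hnp2q1 : ¬ G.Adj p2 q1 := by
      intro h; rcases hN2 _ h with h'|h'|h'
      exacts [(hC p1).ne' h', hq1p3 h', hq12 h']
    have hnp3q1 : ¬ G.Adj p3 q1 := by
      intro h; rcases hN3 _ h with h'|h'|h'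
      exacts [(hC p1).ne' h', hq1p2 h', hq13 h']
    have hnp3q2 : ¬ G.Adj p3 q2 := by
      intro h; rcases hN3 _ h with h'|h'|h'
      exacts [hq2p1 h', (hC p2).ne' h', hq23 h']
    have hnp1q3 : ¬ G.Adj p1 q3 := by
      intro h; rcases hN1 _ h with h'|h'|h'
      exacts [hq3p2 h', (hC p3).ne' h', hq13 h'.symm]
    have hnp2q3 : ¬ G.Adj p2 q3 := by
      intro h; rcases hN2 _ h with h'|h'|h'
      exacts [hq3p1 h', (hC p3).ne' h', hq23 h'.symm]
    -- third neighbour u of q1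
    obtain ⟨c1, c2, c3, k1, k2, k3, hS1, hS2, hS3, htotq1⟩ := nbhd q1
    obtain ⟨u, hq1u, hup1, huq2, hNq1⟩ :=
      aux_third _ htotq1 k1 k2 k3 hS1 hS2 hS3 hq1a.symm hadj (Ne.symm hq2p1)
    have huq1 : u ≠ q1 := hq1u.ne'
    have hup2 : u ≠ p2 := fun h => hnp2q1 (h ▸ hq1u).symm
    have hup3 : u ≠ p3 := fun h => hnp3q1 (h ▸ hq1u).symm
    have hnp1u : ¬ G.Adj p1 u := by
      intro h; rcases hN1 _ h with h'|h'|h'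
      exacts [hup2 h', hup3 h', huq1 h']
    have hq2u : G.Adj q2 u := by
      have hA1 := hNq1 _ (hA q1)
      have hB1 := hNq1 _ (hB q1)
      have hABq := hAB q1
      rcases hA1 with h1|h1|h1 <;> rcases hB1 with h2|h2|h2 <;> rw [h1, h2] at hABq <;>
        first
        | exact absurd hABq G.irrefl
        | exact absurd hABq hnp1q2
        | exact absurd hABq hnp1u
        | exact absurd hABq.symm hnp1q2
        | exact absurd hABq.symm hnp1u
        | exact hABq
        | exact hABq.symm
    have hNq2 : ∀ z, G.Adj q2 z → z = p2 ∨ z = q1 ∨ z = u := by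
      obtain ⟨d1, d2, d3, l1, l2, l3, hT1, hT2, hT3, htotq2⟩ := nbhd q2
      exact aux3 _ htotq2 hq2a.symm hadj.symm hq2u (Ne.symm hq1p2) (Ne.symm hup2)
        (fun h => huq1 h.symm)
    by_cases huq3 : u = q3
    · -- prism case
      subst huq3
      have hNq3 : ∀ z, G.Adj q3 z → z = p3 ∨ z = q1 ∨ z = q2 := by
        obtain ⟨e1, e2, e3, m1, m2, m3, hU1, hU2, hU3, htotq3⟩ := nbhd q3
        exact aux3 _ htotq3 hq3a.symm hq1u.symm hq2u.symm (Ne.symm hq1p3)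
          (Ne.symm hq2p3) hq12
      have hall : ∀ t : V, t = p1 ∨ t = p2 ∨ t = p3 ∨ t = q1 ∨ t = q2 ∨ t = q3 := by
        by_contra hc
        push_neg at hc
        obtain ⟨t, ht1, ht2, ht3, ht4, ht5, ht6⟩ := hc
        refine sep_no_conn G ∅ {p1, p2, p3, q1, q2, q3} p1 t (by simp) (by simp)
          (by simp [ht1, ht2, ht3, ht4, ht5, ht6]) (by simp) ?_ (hconn ∅ (by simp))
        intro a b ha _ hab
        simp only [Set.mem_insert_iff, Set.mem_singleton_iff] at ha ⊢
        rcases ha with rfl|rfl|rfl|rfl|rfl|rfl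
        · rcases hN1 b hab with rfl|rfl|rfl
          exacts [Or.inr (Or.inl rfl), Or.inr (Or.inr (Or.inl rfl)),
            Or.inr (Or.inr (Or.inr (Or.inl rfl)))]
        · rcases hN2 b hab with rfl|rfl|rfl
          exacts [Or.inl rfl, Or.inr (Or.inr (Or.inl rfl)),
            Or.inr (Or.inr (Or.inr (Or.inr (Or.inl rfl))))]
        · rcases hN3 b hab with rfl|rfl|rfl
          exacts [Or.inl rfl, Or.inr (Or.inl rfl),
            Or.inr (Or.inr (Or.inr (Or.inr (Or.inr rfl))))]
        · rcases hNq1 b hab with rfl|rfl|rfl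
          exacts [Or.inl rfl, Or.inr (Or.inr (Or.inr (Or.inr (Or.inl rfl)))),
            Or.inr (Or.inr (Or.inr (Or.inr (Or.inr rfl))))]
        · rcases hNq2 b hab with rfl|rfl|rfl
          exacts [Or.inr (Or.inl rfl), Or.inr (Or.inr (Or.inr (Or.inl rfl))),
            Or.inr (Or.inr (Or.inr (Or.inr (Or.inr rfl))))]
        · rcases hNq3 b hab with rfl|rfl|rfl
          exacts [Or.inr (Or.inr (Or.inl rfl)), Or.inr (Or.inr (Or.inr (Or.inl rfl))),
            Or.inr (Or.inr (Or.inr (Or.inr (Or.inl rfl))))]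
      -- all adjacency and non-adjacency facts
      have a12 := h12; have a21 := h12.symm
      have a13 := h13; have a31 := h13.symm
      have a23 := h23; have a32 := h23.symm
      have b11 := hq1a; have b11' := hq1a.symm
      have b22 := hq2a; have b22' := hq2a.symm
      have b33 := hq3a; have b33' := hq3a.symm
      have c12 := hadj; have c21 := hadj.symm
      have c13 := hq1u; have c31 := hq1u.symm
      have c23 := hq2u; have c32 := hq2u.symm
      have n12 := hnp1q2; have n12' : ¬ G.Adj q2 p1 := fun h => hnp1q2 h.symm
      have n13 := hnp1q3; have n13' : ¬ G.Adj q3 p1 := fun h => hnp1q3 h.symm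
      have n21 := hnp2q1; have n21' : ¬ G.Adj q1 p2 := fun h => hnp2q1 h.symm
      have n23 := hnp2q3; have n23' : ¬ G.Adj q3 p2 := fun h => hnp2q3 h.symm
      have n31 := hnp3q1; have n31' : ¬ G.Adj q1 p3 := fun h => hnp3q1 h.symm
      have n32 := hnp3q2; have n32' : ¬ G.Adj q2 p3 := fun h => hnp3q2 h.symm
      obtain ⟨f, hfp1, hfp2, hfp3, hfq1, hfq2, hfq3⟩ :
          ∃ f : V → Fin 6, f p1 = 0 ∧ f p2 = 2 ∧ f p3 = 4 ∧ f q1 = 3 ∧ f q2 = 5 ∧ f q3 = 1 := by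
        refine ⟨fun w => if w = p1 then 0 else if w = p2 then 2 else if w = p3 then 4
          else if w = q1 then 3 else if w = q2 then 5 else 1, ?_, ?_, ?_, ?_, ?_, ?_⟩ <;>
          simp [h12.ne', h13.ne', h23.ne', hq1a.ne', hq2a.ne', hq3a.ne',
            hq1p2, hq1p3, hq2p1, hq2p3, hq3p1, hq3p2,
            Ne.symm hq12, Ne.symm hq13, Ne.symm hq23]
      have hleft : Function.LeftInverse ![p1, q3, p2, q1, p3, q2] f := by
        intro w
        rcases hall w with rfl|rfl|rfl|rfl|rfl|rfl <;>
          simp only [hfp1, hfp2, hfp3, hfq1, hfq2, hfq3] <;> rfl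
      have hright : Function.RightInverse ![p1, q3, p2, q1, p3, q2] f := by
        intro i
        fin_cases i <;>
          first
          | exact hfp1 | exact hfp2 | exact hfp3 | exact hfq1 | exact hfq2 | exact hfq3
      refine hC6 ⟨⟨⟨f, ![p1, q3, p2, q1, p3, q2], hleft, hright⟩, ?_⟩⟩
      intro a b
      show ((cycleGraph 6)ᶜ).Adj (f a) (f b) ↔ G.Adj a b
      rcases hall a with rfl|rfl|rfl|rfl|rfl|rfl <;> rcases hall b with rfl|rfl|rfl|rfl|rfl|rfl <;>
        simp only [hfp1, hfp2, hfp3, hfq1, hfq2, hfq3] <;>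
        first
        | exact iff_of_false (by decide) G.irrefl
        | exact iff_of_true (by decide) (by assumption)
        | exact iff_of_false (by decide) (by assumption)
    · -- separator {q3, fC u}
      have huniqU := uniq u q1 q2 hq1u.symm hq2u.symm hq12 hadj
      have hNu : ∀ z, G.Adj u z → z = q1 ∨ z = q2 ∨ z = fC u := by
        intro z hz
        rcases huniqU with ⟨h1, h2⟩|⟨h1, h2⟩ <;> rcases hmem u z hz with rfl|rfl|rfl
        · exact Or.inl h1.symm
        · exact Or.inr (Or.inl h2.symm)
        · exact Or.inr (Or.inr rfl)
        · exact Or.inr (Or.inl h2.symm)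
        · exact Or.inl h1.symm
        · exact Or.inr (Or.inr rfl)
      set u' := fC u with hu'def
      have hu'q1 : u' ≠ q1 := by
        rcases huniqU with ⟨h1, h2⟩|⟨h1, h2⟩
        · exact fun h => hac u (h1 ▸ h.symm)
        · exact fun h => hbc u (h1 ▸ h.symm)
      have hu'q2 : u' ≠ q2 := by
        rcases huniqU with ⟨h1, h2⟩|⟨h1, h2⟩
        · exact fun h => hbc u (h2 ▸ h.symm)
        · exact fun h => hac u (h2 ▸ h.symm)
      have hu'u : u' ≠ u := (hC u).ne'
      have hu'p1 : u' ≠ p1 := by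
        intro h
        apply hnp1u
        rw [← h, hu'def]
        exact (hC u).symm
      have hu'p2 : u' ≠ p2 := by
        intro h
        have h2' : G.Adj p2 u := by rw [← h, hu'def]; exact (hC u).symm
        rcases hN2 _ h2' with h'|h'|h'
        exacts [hup1 h', hup3 h', huq2 h']
      -- a neighbour of q3 outside everything
      obtain ⟨e1, e2, e3, m1, m2, m3, hU1, hU2, hU3, htotq3⟩ := nbhd q3
      obtain ⟨r, s, hr, hs, hrs, hrp3, hsp3⟩ :=
        aux_pair _ htotq3 m1 m2 m3 hU1 hU2 hU3 hq3a.symm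
      have hz' : ∀ z, G.Adj q3 z → z ≠ p1 ∧ z ≠ p2 ∧ z ≠ q1 ∧ z ≠ q2 := by
        intro z hz
        refine ⟨fun h => hnp1q3 (h ▸ hz).symm, fun h => hnp2q3 (h ▸ hz).symm,
          fun h => ?_, fun h => ?_⟩
        · subst h
          rcases hNq1 _ hz.symm with h'|h'|h'
          exacts [hq3p1 h', hq23 h'.symm, huq3 h'.symm]
        · subst h
          rcases hNq2 _ hz.symm with h'|h'|h'
          exacts [hq3p2 h', hq13 h'.symm, huq3 h'.symm]
      obtain ⟨t, ht, htp3, htu, htu'⟩ : ∃ t, G.Adj q3 t ∧ t ≠ p3 ∧ t ≠ u ∧ t ≠ u' := by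
        by_cases hru : r = u
        · refine ⟨s, hs, hsp3, fun h => hrs (hru.trans h.symm), fun h => ?_⟩
          have hq3u : G.Adj u q3 := (hru ▸ hr).symm
          rcases hNu _ hq3u with h'|h'|h'
          · exact hq13 h'.symm
          · exact hq23 h'.symm
          · exact hs.ne' (h.trans h'.symm)
        · by_cases hru' : r = u'
          · refine ⟨s, hs, hsp3, fun h => ?_, fun h => hrs (hru'.trans h.symm)⟩
            have hq3u : G.Adj u q3 := (h ▸ hs).symm
            rcases hNu _ hq3u with h'|h'|h'
            · exact hq13 h'.symm
            · exact hq23 h'.symm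
            · exact hr.ne' (hru'.trans h'.symm)
          · exact ⟨r, hr, hrp3, hru, hru'⟩
      obtain ⟨htp1, htp2, htq1, htq2⟩ := hz' t ht
      refine sep_no_conn G {q3, u'} {p1, p2, p3, q1, q2, u} p1 t (by simp)
        (by simp [Ne.symm hq3p1, Ne.symm hu'p1]) ?_ (by simp [ht.ne', htu']) ?_ (hconn _ ?_)
      · simp [htp1, htp2, htp3, htq1, htq2, htu]
      · intro a b ha hbS hab
        simp only [Set.mem_insert_iff, Set.mem_singleton_iff] at ha hbS ⊢
        push_neg at hbS
        rcases ha with rfl|rfl|rfl|rfl|rfl|rfl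
        · rcases hN1 b hab with rfl|rfl|rfl
          exacts [Or.inr (Or.inl rfl), Or.inr (Or.inr (Or.inl rfl)),
            Or.inr (Or.inr (Or.inr (Or.inl rfl)))]
        · rcases hN2 b hab with rfl|rfl|rfl
          exacts [Or.inl rfl, Or.inr (Or.inr (Or.inl rfl)),
            Or.inr (Or.inr (Or.inr (Or.inr (Or.inl rfl))))]
        · rcases hN3 b hab with rfl|rfl|rfl
          exacts [Or.inl rfl, Or.inr (Or.inl rfl), absurd rfl hbS.1]
        · rcases hNq1 b hab with rfl|rfl|rfl
          exacts [Or.inl rfl, Or.inr (Or.inr (Or.inr (Or.inr (Or.inl rfl)))),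
            Or.inr (Or.inr (Or.inr (Or.inr (Or.inr rfl))))]
        · rcases hNq2 b hab with rfl|rfl|rfl
          exacts [Or.inr (Or.inl rfl), Or.inr (Or.inr (Or.inr (Or.inl rfl))),
            Or.inr (Or.inr (Or.inr (Or.inr (Or.inr rfl))))]
        · rcases hNu b hab with rfl|rfl|rfl
          exacts [Or.inr (Or.inr (Or.inr (Or.inl rfl))),
            Or.inr (Or.inr (Or.inr (Or.inr (Or.inl rfl)))), absurd rfl hbS.2]
      · rw [Nat.card_coe_set_eq]
        exact le_trans (Set.ncard_insert_le _ _) (by simp)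
  -- triangle machinery
  have tri_eq : ∀ x y : V, (x = y ∨ x = fA y ∨ x = fB y) →
      ({x, fA x, fB x} : Finset V) = {y, fA y, fB y} := by
    intro x y hx
    rcases hx with rfl|rfl|rfl
    · rfl
    · rcases uniqA y with ⟨h1, h2⟩|⟨h1, h2⟩ <;>
        (ext w; simp only [Finset.mem_insert, Finset.mem_singleton]; rw [← h1, ← h2]; tauto)
    · rcases uniqB y with ⟨h1, h2⟩|⟨h1, h2⟩ <;>
        (ext w; simp only [Finset.mem_insert, Finset.mem_singleton]; rw [← h1, ← h2]; tauto)
  have tri_adj : ∀ x a b : V, a ∈ ({x, fA x, fB x} : Finset V) →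
      b ∈ ({x, fA x, fB x} : Finset V) → a ≠ b → G.Adj a b := by
    intro x a b ha hb hne
    simp only [Finset.mem_insert, Finset.mem_singleton] at ha hb
    rcases ha with rfl|rfl|rfl <;> rcases hb with rfl|rfl|rfl <;>
      first
      | exact absurd rfl hne
      | exact hA _
      | exact hB _
      | exact hAB _
      | exact (hA _).symm
      | exact (hB _).symm
      | exact (hAB _).symm
  have tri_disj : ∀ x y : V, ({x, fA x, fB x} : Finset V) ≠ {y, fA y, fB y} →
      Disjoint ({x, fA x, fB x} : Finset V) ({y, fA y, fB y} : Finset V) := by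
    intro x y hne
    rw [Finset.disjoint_left]
    intro w hwx hwy
    apply hne
    have h1 := tri_eq w x (by simpa using hwx)
    have h2 := tri_eq w y (by simpa using hwy)
    rw [← h1, h2]
  have tri_card : ∀ x : V, ({x, fA x, fB x} : Finset V).card = 3 := by
    intro x
    rw [Finset.card_insert_of_notMem (by simp [(hA x).ne, (hB x).ne]),
      Finset.card_insert_of_notMem (by simp [hab x]), Finset.card_singleton]
  -- pick a vertex
  obtain ⟨v⟩ : Nonempty V := Fintype.card_pos_iff.mp (by omega)
  -- the three lemP instances
  have I1 : ¬ G.Adj (fC v) (fC (fA v)) :=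
    fun h => lemP v (fA v) (fB v) (hA v) (hB v) (hAB v) (hmem v) (hmemA v) (hmemB v)
      (Ne.symm (hac v)) (Ne.symm (hbc v)) (hCA_ne_v v) (hCA_ne_B v) (hCB_ne_v v) (hCB_ne_A v)
      (Ne.symm (hD1 v)) (Ne.symm (hD2 v)) (hD3 v) h
  have hmemA' : ∀ w, G.Adj (fA v) w → w = fB v ∨ w = v ∨ w = fC (fA v) := by
    intro w hw; rcases hmemA v w hw with h|h|h <;> tauto
  have hmemB' : ∀ w, G.Adj (fB v) w → w = fA v ∨ w = v ∨ w = fC (fB v) := by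
    intro w hw; rcases hmemB v w hw with h|h|h <;> tauto
  have hmemv' : ∀ w, G.Adj v w → w = fB v ∨ w = fA v ∨ w = fC v := by
    intro w hw; rcases hmem v w hw with h|h|h <;> tauto
  have I2 : ¬ G.Adj (fC (fA v)) (fC (fB v)) :=
    fun h => lemP (fA v) (fB v) v (hAB v) (hA v).symm (hB v).symm hmemA' hmemB' (hmem v)
      (hCA_ne_B v) (hCA_ne_v v) (hCB_ne_A v) (hCB_ne_v v) (Ne.symm (hac v)) (Ne.symm (hbc v))
      (hD3 v) (hD1 v) (hD2 v) h
  have I3 : ¬ G.Adj (fC v) (fC (fB v)) :=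
    fun h => lemP v (fB v) (fA v) (hB v) (hA v) (hAB v).symm hmemv' (hmemB v) (hmemA v)
      (Ne.symm (hbc v)) (Ne.symm (hac v)) (hCB_ne_v v) (hCB_ne_A v) (hCA_ne_v v) (hCA_ne_B v)
      (Ne.symm (hD2 v)) (Ne.symm (hD1 v)) (Ne.symm (hD3 v)) h
  -- the four triangles are pairwise distinct
  have hq1not : fC v ∉ ({v, fA v, fB v} : Finset V) := by
    simp [(hC v).ne', Ne.symm (hac v), Ne.symm (hbc v)]
  have hq2not : fC (fA v) ∉ ({v, fA v, fB v} : Finset V) := by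
    simp [hCA_ne_v v, (hC (fA v)).ne', hCA_ne_B v]
  have hq3not : fC (fB v) ∉ ({v, fA v, fB v} : Finset V) := by
    simp [hCB_ne_v v, hCB_ne_A v, (hC (fB v)).ne']
  have hmemself : ∀ x : V, x ∈ ({x, fA x, fB x} : Finset V) := by intro x; simp
  have hT01 : ({fC v, fA (fC v), fB (fC v)} : Finset V) ≠ {v, fA v, fB v} := by
    intro h
    exact hq1not (h ▸ hmemself (fC v))
  have hT02 : ({fC (fA v), fA (fC (fA v)), fB (fC (fA v))} : Finset V) ≠ {v, fA v, fB v} := by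
    intro h
    exact hq2not (h ▸ hmemself (fC (fA v)))
  have hT03 : ({fC (fB v), fA (fC (fB v)), fB (fC (fB v))} : Finset V) ≠ {v, fA v, fB v} := by
    intro h
    exact hq3not (h ▸ hmemself (fC (fB v)))
  have hT12 : ({fC v, fA (fC v), fB (fC v)} : Finset V) ≠
      {fC (fA v), fA (fC (fA v)), fB (fC (fA v))} := by
    intro h
    exact I1 (tri_adj (fC v) (fC v) (fC (fA v)) (hmemself _) (h ▸ hmemself (fC (fA v)))
      (Ne.symm (hD1 v)))
  have hT13 : ({fC v, fA (fC v), fB (fC v)} : Finset V) ≠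
      {fC (fB v), fA (fC (fB v)), fB (fC (fB v))} := by
    intro h
    exact I3 (tri_adj (fC v) (fC v) (fC (fB v)) (hmemself _) (h ▸ hmemself (fC (fB v)))
      (Ne.symm (hD2 v)))
  have hT23 : ({fC (fA v), fA (fC (fA v)), fB (fC (fA v))} : Finset V) ≠
      {fC (fB v), fA (fC (fB v)), fB (fC (fB v))} := by
    intro h
    exact I2 (tri_adj (fC (fA v)) (fC (fA v)) (fC (fB v)) (hmemself _)
      (h ▸ hmemself (fC (fB v))) (hD3 v))
  -- count
  have hd01 := tri_disj _ _ (Ne.symm hT01)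
  have hd02 := tri_disj _ _ (Ne.symm hT02)
  have hd03 := tri_disj _ _ (Ne.symm hT03)
  have hd12 := tri_disj _ _ hT12
  have hd13 := tri_disj _ _ hT13
  have hd23 := tri_disj _ _ hT23
  have hU : (({v, fA v, fB v} : Finset V) ∪ {fC v, fA (fC v), fB (fC v)} ∪
      {fC (fA v), fA (fC (fA v)), fB (fC (fA v))} ∪
      {fC (fB v), fA (fC (fB v)), fB (fC (fB v))}).card = 12 := by
    rw [Finset.card_union_of_disjoint (by
        refine Finset.disjoint_union_left.mpr ⟨Finset.disjoint_union_left.mpr ⟨?_, ?_⟩, ?_⟩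
        · exact hd03.symm.symm
        · exact hd13
        · exact hd23),
      Finset.card_union_of_disjoint (Finset.disjoint_union_left.mpr ⟨hd02.symm.symm, hd12⟩),
      Finset.card_union_of_disjoint hd01.symm.symm, tri_card, tri_card, tri_card, tri_card]
  calc 12 = _ := hU.symm
    _ ≤ Fintype.card V := by rw [← Finset.card_univ]; exact Finset.card_le_univ _

/-- A 3-connected cubic claw-free graph isomorphic neither to `K₄` nor
to the complement of `C₆` has at least 12 vertices. -/
theorem stmt_19 {V : Type*} [Fintype V] (G : SimpleGraph V)
    (h3c : ThreeConnected G) (hcubic : IsCubic G) (hcf : IsClawFree G)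
    (hK4 : ¬ Nonempty (G ≃g (⊤ : SimpleGraph (Fin 4))))
    (hC6 : ¬ Nonempty (G ≃g (SimpleGraph.cycleGraph 6)ᶜ)) :
    12 ≤ Fintype.card V :=
  stmt_19x G h3c hcubic hcf hK4 hC6
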